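/- arXiv:1605.07221 — 2 statements merged into one kernel-verified Lean document; each statement's English description precedes it below -/
import Mathlib

section
/- Suppose the measurement operator satisfies (2r, δ)-RIP, X* = U*·U*ᵀ for some U* ∈ ℝ^{n×r}, and U ∈ ℝ^{n×r} satisfies the first-order stationarity equation Σ_{i=1}^m ⟨A_i, U·Uᵀ − X*⟩·A_i·U = 0. Let P ∈ ℝ^{n×n} be the orthogonal projection onto the column space of U. Then ‖(U·Uᵀ − X*)·P‖_F ≤ δ·‖U·Uᵀ − X*‖_F. -/
open Matrix MeasureTheory BigOperators

/-- Matrix inner product `⟨A, X⟩ = trace(Aᵀ X)`. -/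
noncomputable def mip {n : ℕ} (A X : Matrix (Fin n) (Fin n) ℝ) : ℝ :=
  (Aᵀ * X).trace

/-- Frobenius norm of a real matrix. -/
noncomputable def frob {n₁ n₂ : ℕ} (M : Matrix (Fin n₁) (Fin n₂) ℝ) : ℝ :=
  Real.sqrt (∑ i, ∑ j, (M i j) ^ 2)

/-- `(k, δ)`-restricted isometry property of the measurement operator `A`. -/
def RIP {n m : ℕ} (A : Fin m → Matrix (Fin n) (Fin n) ℝ) (k : ℕ) (δ : ℝ) : Prop :=
  ∀ X : Matrix (Fin n) (Fin n) ℝ, X.rank ≤ k →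
    (1 - δ) * frob X ^ 2 ≤ (1 / (m : ℝ)) * ∑ i, mip (A i) X ^ 2 ∧
    (1 / (m : ℝ)) * ∑ i, mip (A i) X ^ 2 ≤ (1 + δ) * frob X ^ 2

/-- Objective `f(U) = ∑ i, (⟨A i, U Uᵀ⟩ - y i)²`. -/
noncomputable def fobj {n m r : ℕ} (A : Fin m → Matrix (Fin n) (Fin n) ℝ) (y : Fin m → ℝ)
    (U : Matrix (Fin n) (Fin r) ℝ) : ℝ :=
  ∑ i, (mip (A i) (U * Uᵀ) - y i) ^ 2

/- ### Auxiliary lemmas -/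

lemma frob_nonneg' {n₁ n₂ : ℕ} (M : Matrix (Fin n₁) (Fin n₂) ℝ) : 0 ≤ frob M :=
  Real.sqrt_nonneg _

lemma frob_sq' {n : ℕ} (M : Matrix (Fin n) (Fin n) ℝ) : frob M ^ 2 = mip M M := by
  rw [frob, Real.sq_sqrt (by positivity), mip, Matrix.trace]
  simp only [Matrix.diag_apply, Matrix.mul_apply, Matrix.transpose_apply]
  rw [Finset.sum_comm]
  exact Finset.sum_congr rfl fun j _ => Finset.sum_congr rfl fun i _ => pow_two (M i j)

lemma frob_eq_zero' {n₁ n₂ : ℕ} (M : Matrix (Fin n₁) (Fin n₂) ℝ) (h : frob M = 0) :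
    M = 0 := by
  have hnn : (0:ℝ) ≤ ∑ i, ∑ j, (M i j) ^ 2 := by positivity
  have hle : (∑ i, ∑ j, (M i j) ^ 2) ≤ 0 := Real.sqrt_eq_zero'.mp h
  have hs : ∑ i, ∑ j, (M i j) ^ 2 = 0 := le_antisymm hle hnn
  ext i j
  have h1 := (Finset.sum_eq_zero_iff_of_nonneg (fun i _ => by positivity)).mp hs i
    (Finset.mem_univ i)
  have h2 := (Finset.sum_eq_zero_iff_of_nonneg (fun j _ => by positivity)).mp h1 j
    (Finset.mem_univ j)
  simpa using pow_eq_zero_iff (two_ne_zero) |>.mp h2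

lemma mip_comm' {n : ℕ} (X Y : Matrix (Fin n) (Fin n) ℝ) : mip X Y = mip Y X := by
  rw [mip, ← Matrix.trace_transpose, Matrix.transpose_mul, Matrix.transpose_transpose, mip]

lemma mip_add_right' {n : ℕ} (A X Y : Matrix (Fin n) (Fin n) ℝ) :
    mip A (X + Y) = mip A X + mip A Y := by
  simp [mip, Matrix.mul_add]

lemma mip_smul_right' {n : ℕ} (A X : Matrix (Fin n) (Fin n) ℝ) (t : ℝ) :
    mip A (t • X) = t * mip A X := by
  simp [mip, Matrix.mul_smul]

lemma mip_sub_right' {n : ℕ} (A X Y : Matrix (Fin n) (Fin n) ℝ) :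
    mip A (X - Y) = mip A X - mip A Y := by
  simp [mip, Matrix.mul_sub]

lemma mip_add_left' {n : ℕ} (X Y Z : Matrix (Fin n) (Fin n) ℝ) :
    mip (X + Y) Z = mip X Z + mip Y Z := by
  simp [mip, Matrix.transpose_add, Matrix.add_mul]

lemma mip_smul_left' {n : ℕ} (X Y : Matrix (Fin n) (Fin n) ℝ) (t : ℝ) :
    mip (t • X) Y = t * mip X Y := by
  simp [mip, Matrix.transpose_smul, Matrix.smul_mul]

lemma rank_add_le' {n₁ n₂ : ℕ} (A B : Matrix (Fin n₁) (Fin n₂) ℝ) :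
    (A + B).rank ≤ A.rank + B.rank := by
  rw [Matrix.rank, Matrix.rank, Matrix.rank, Matrix.mulVecLin_add]
  have hle : LinearMap.range (A.mulVecLin + B.mulVecLin) ≤
      LinearMap.range A.mulVecLin ⊔ LinearMap.range B.mulVecLin := by
    rintro x ⟨v, rfl⟩
    exact Submodule.mem_sup.2 ⟨A.mulVecLin v, ⟨v, rfl⟩, B.mulVecLin v, ⟨v, rfl⟩, rfl⟩
  exact (Submodule.finrank_mono hle).trans
    (Submodule.finrank_add_le_finrank_add_finrank _ _)

/-- First-order condition: at a stationary point, the error restricted to the column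
space of `U` is small. -/
theorem first_order_condition {n m r : ℕ} (hn : 0 < n) (hm : 0 < m) (hr : 0 < r)
    (A : Fin m → Matrix (Fin n) (Fin n) ℝ)
    (δ : ℝ) (hRIP : RIP A (2 * r) δ)
    (Ustar : Matrix (Fin n) (Fin r) ℝ) (Xstar : Matrix (Fin n) (Fin n) ℝ)
    (hX : Xstar = Ustar * Ustarᵀ)
    (U : Matrix (Fin n) (Fin r) ℝ)
    (hstat : ∑ i, mip (A i) (U * Uᵀ - Xstar) • (A i * U) = 0)
    (P : Matrix (Fin n) (Fin n) ℝ) (hPsym : Pᵀ = P) (hPidem : P * P = P)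
    (hPrange : LinearMap.range P.mulVecLin = LinearMap.range U.mulVecLin) :
    frob ((U * Uᵀ - Xstar) * P) ≤ δ * frob (U * Uᵀ - Xstar) := by
  subst hX
  set E : Matrix (Fin n) (Fin n) ℝ := U * Uᵀ - Ustar * Ustarᵀ with hE
  set F : Matrix (Fin n) (Fin n) ℝ := E * P with hF
  set a : ℝ := frob E with ha
  set b : ℝ := frob F with hb
  clear_value a b
  -- rank of E
  have hrankE : E.rank ≤ 2 * r := by
    have h1 : E = U * Uᵀ + (-Ustar) * Ustarᵀ := by
      rw [Matrix.neg_mul, ← sub_eq_add_neg]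
    calc E.rank ≤ (U * Uᵀ).rank + ((-Ustar) * Ustarᵀ).rank := h1 ▸ rank_add_le' _ _
      _ ≤ U.rank + (-Ustar).rank :=
          add_le_add (Matrix.rank_mul_le_left _ _) (Matrix.rank_mul_le_left _ _)
      _ ≤ r + r := add_le_add
          (by simpa using Matrix.rank_le_card_width U)
          (by simpa using Matrix.rank_le_card_width (-Ustar))
      _ = 2 * r := by ring
  -- representation F = Zᵀ * Uᵀ
  have hcols : ∀ j, ∃ w : Fin r → ℝ, U.mulVec w = fun i => (P * Eᵀ) i j := by
    intro j
    have hmem : (fun i => (P * Eᵀ) i j) ∈ LinearMap.range P.mulVecLin := by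
      refine ⟨fun k => Eᵀ k j, ?_⟩
      funext i
      simp [Matrix.mulVecLin_apply, Matrix.mulVec, dotProduct, Matrix.mul_apply]
    rw [hPrange] at hmem
    obtain ⟨w, hw⟩ := hmem
    exact ⟨w, by simpa [Matrix.mulVecLin_apply] using hw⟩
  choose W hW using hcols
  set Z : Matrix (Fin r) (Fin n) ℝ := Matrix.of fun k j => W j k with hZ
  have hUZ : U * Z = P * Eᵀ := by
    ext i j
    have := congrFun (hW j) i
    simpa [Matrix.mul_apply, Matrix.mulVec, dotProduct, hZ] using this
  have hFZ : F = Zᵀ * Uᵀ := by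
    have hFt : Fᵀ = U * Z := by
      rw [hUZ, hF, Matrix.transpose_mul, hPsym]
    calc F = Fᵀᵀ := by rw [Matrix.transpose_transpose]
      _ = (U * Z)ᵀ := by rw [hFt]
      _ = Zᵀ * Uᵀ := Matrix.transpose_mul _ _
  clear_value E F
  -- mip (A i) F as a trace involving A i * U
  have hkey : ∀ i, mip (A i) F = ((A i * U)ᵀ * Zᵀ).trace := by
    intro i
    rw [mip, hFZ, ← Matrix.mul_assoc, Matrix.trace_mul_cycle, Matrix.transpose_mul]
  -- stationarity gives orthogonality
  have hS : ∑ i, mip (A i) E * mip (A i) F = 0 := by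
    have h0 := congrArg (fun M : Matrix (Fin n) (Fin r) ℝ => (Mᵀ * Zᵀ).trace) hstat
    simp only [Matrix.transpose_sum, Matrix.transpose_smul, Matrix.sum_mul,
      Matrix.smul_mul, Matrix.trace_sum, Matrix.trace_smul, smul_eq_mul,
      Matrix.transpose_zero, Matrix.zero_mul, Matrix.trace_zero] at h0
    rw [← h0]
    exact Finset.sum_congr rfl fun i _ => by rw [hkey i]
  -- inner product identities
  have hEE : mip E E = a ^ 2 := by rw [ha, frob_sq']
  have hFF : mip F F = b ^ 2 := by rw [hb, frob_sq']
  have hEF : mip E F = b ^ 2 := by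
    rw [← hFF, mip, mip, hF, Matrix.transpose_mul, hPsym, Matrix.mul_assoc P,
      Matrix.trace_mul_comm P, Matrix.mul_assoc Eᵀ, Matrix.mul_assoc E, hPidem]
  have hFE : mip F E = b ^ 2 := by rw [mip_comm', hEF]
  -- expansions
  have expandp : ∀ t : ℝ, frob (E + t • F) ^ 2 = a ^ 2 + 2 * t * b ^ 2 + t ^ 2 * b ^ 2 := by
    intro t
    rw [frob_sq', mip_add_right', mip_smul_right', mip_add_left', mip_add_left',
      mip_smul_left', mip_smul_left', hEE, hEF, hFE, hFF]
    ring
  have expandm : ∀ t : ℝ, frob (E - t • F) ^ 2 = a ^ 2 - 2 * t * b ^ 2 + t ^ 2 * b ^ 2 := by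
    intro t
    have hrwm : E - t • F = E + (-t) • F := by rw [neg_smul, ← sub_eq_add_neg]
    rw [hrwm, expandp]
    ring
  -- the key variational inequality
  have key : ∀ t : ℝ, t * b ^ 2 ≤ δ / 2 * (a ^ 2 + t ^ 2 * b ^ 2) := by
    intro t
    have hrp : (E + t • F).rank ≤ 2 * r := by
      have heq : E + t • F = E * (1 + t • P) := by
        rw [Matrix.mul_add, Matrix.mul_one, Matrix.mul_smul, ← hF]
      rw [heq]
      exact (Matrix.rank_mul_le_left _ _).trans hrankE
    have hrm : (E - t • F).rank ≤ 2 * r := by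
      have heq : E - t • F = E * (1 - t • P) := by
        rw [Matrix.mul_sub, Matrix.mul_one, Matrix.mul_smul, ← hF]
      rw [heq]
      exact (Matrix.rank_mul_le_left _ _).trans hrankE
    have h1 := (hRIP (E + t • F) hrp).1
    have h2 := (hRIP (E - t • F) hrm).2
    have hsums : ∑ i, mip (A i) (E + t • F) ^ 2 = ∑ i, mip (A i) (E - t • F) ^ 2 := by
      have h4 : ∑ i, (mip (A i) (E + t • F) ^ 2 - mip (A i) (E - t • F) ^ 2)
          = 4 * t * ∑ i, mip (A i) E * mip (A i) F := by
        rw [Finset.mul_sum]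
        refine Finset.sum_congr rfl fun i _ => ?_
        rw [mip_add_right', mip_sub_right', mip_smul_right']
        ring
      rw [hS, mul_zero, Finset.sum_sub_distrib] at h4
      linarith
    rw [hsums] at h1
    have hchain : (1 - δ) * frob (E + t • F) ^ 2 ≤ (1 + δ) * frob (E - t • F) ^ 2 :=
      h1.trans h2
    rw [expandp, expandm] at hchain
    nlinarith [hchain]
  -- nonnegativity of δ when a ≠ 0
  have hanon : 0 ≤ a := ha ▸ frob_nonneg' E
  have hbnon : 0 ≤ b := hb ▸ frob_nonneg' F
  have hδ : a ≠ 0 → 0 ≤ δ := by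
    intro ha0
    have h := hRIP E hrankE
    rw [← ha] at h
    have ha2 : 0 < a ^ 2 := pow_pos (lt_of_le_of_ne hanon (Ne.symm ha0)) 2
    nlinarith [h.1, h.2]
  -- conclude
  by_cases hb0 : b = 0
  · by_cases ha0 : a = 0
    · rw [hb0, ha0, mul_zero]
    · rw [hb0]
      exact mul_nonneg (hδ ha0) hanon
  · have hbpos : 0 < b := lt_of_le_of_ne hbnon (Ne.symm hb0)
    have ha0 : a ≠ 0 := by
      intro ha0
      have hE0 : E = 0 := frob_eq_zero' E (ha ▸ ha0 : frob E = 0)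
      have hF0 : F = 0 := by rw [hF, hE0, Matrix.zero_mul]
      have hbz : b = 0 := by rw [hb, hF0, frob]; simp
      exact hb0 hbz
    have hapos : 0 < a := lt_of_le_of_ne hanon (Ne.symm ha0)
    have hk := key (a / b)
    have e1 : a / b * b ^ 2 = a * b := by
      rw [pow_two, ← mul_assoc, div_mul_cancel₀ _ hb0]
    have e2 : (a / b) ^ 2 * b ^ 2 = a ^ 2 := by
      rw [div_pow, div_mul_cancel₀ _ (pow_ne_zero 2 hb0)]
    rw [e1, e2] at hk
    have e3 : δ / 2 * (a ^ 2 + a ^ 2) = δ * a ^ 2 := by ring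
    rw [e3] at hk
    have hab : a * b ≤ a * (δ * a) := by
      have e4 : a * (δ * a) = δ * a ^ 2 := by ring
      linarith
    exact le_of_mul_le_mul_left hab hapos
end

section
/- Let U, U* ∈ ℝ^{n×r} and let R be an r×r orthogonal matrix such that (U*·R)ᵀ·U is symmetric and positive semidefinite. Then ‖U·Uᵀ − U*·U*ᵀ‖_F² ≥ 2·(√2 − 1)·σ_r(U*·U*ᵀ)·‖U − U*·R‖_F², where σ_r(U*·U*ᵀ) denotes the r-th largest eigenvalue of the positive semidefinite matrix U*·U*ᵀ. -/
open Matrix MeasureTheory BigOperators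

open scoped Classical in
/-- The `k`-th largest eigenvalue of a (Hermitian) real matrix; junk value `0` otherwise. -/
noncomputable def nthLargestEig {n : ℕ} (M : Matrix (Fin n) (Fin n) ℝ) (k : ℕ) : ℝ :=
  if h : M.IsHermitian ∧ 0 < k ∧ k ≤ n then
    (h.1.eigenvalues ∘ Tuple.sort h.1.eigenvalues)
      ⟨n - k, Nat.sub_lt (lt_of_lt_of_le h.2.1 h.2.2) h.2.1⟩
  else 0

/-!
Write `Q = U* R`, `P = Qᵀ U`, `B = Qᵀ Q`, `G = Uᵀ U` and `σ = σ_r(U* U*ᵀ)`. Then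
`‖U Uᵀ - Q Qᵀ‖² = tr G² - 2 tr P² + tr B²` and `‖U - Q‖² = tr (B - 2P + G)`, with `P ⪰ 0`,
`B - 2P + G = (U - Q)ᵀ (U - Q) ⪰ 0`, and `B ⪰ σ` because `R` is orthogonal and `U*ᵀ U*` has
the `r` largest eigenvalues of `U* U*ᵀ`. In an eigenbasis of `C = 2P - G`, with eigenvalues `pᵢ`,
the diagonal entries `bᵢ` of `B` and `tᵢ` of `P` satisfy `bᵢ ≥ σ`, `bᵢ ≥ pᵢ` and `tᵢ ≥ 0`, while
`tr B² ≥ ∑ bᵢ²` and `tr P² ≥ ∑ tᵢ²`; the inequality then splits into the scalar inequalities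
`2(√2 - 1) σ (bᵢ - pᵢ) ≤ bᵢ² + pᵢ² + 2tᵢ² - 4tᵢpᵢ`.
-/

lemma frob_sq_eq_trace {n₁ n₂ : ℕ} (M : Matrix (Fin n₁) (Fin n₂) ℝ) :
    frob M ^ 2 = (Mᵀ * M).trace := by
  rw [frob, Real.sq_sqrt (by positivity), trace, Finset.sum_comm]
  simp [mul_apply, sq]

lemma frob_sq_sub_eq_trace {n r : ℕ} (U Q : Matrix (Fin n) (Fin r) ℝ) :
    frob (U - Q) ^ 2 = (Qᵀ * Q - 2 • (Qᵀ * U) + Uᵀ * U).trace := by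
  rw [frob_sq_eq_trace, transpose_sub, Matrix.sub_mul, Matrix.mul_sub, Matrix.mul_sub]
  simp only [trace_sub, trace_add, trace_smul, ← trace_transpose (Uᵀ * Q), transpose_mul,
    transpose_transpose]
  ring

lemma frob_sq_mul_transpose_sub_mul_transpose {n r : ℕ} (U Q : Matrix (Fin n) (Fin r) ℝ) :
    frob (U * Uᵀ - Q * Qᵀ) ^ 2 =
      (Uᵀ * U * (Uᵀ * U)).trace - 2 * (Qᵀ * U * (Qᵀ * U)ᵀ).trace + (Qᵀ * Q * (Qᵀ * Q)).trace := by
  have hUQ : (U * Uᵀ * (Q * Qᵀ)).trace = (Qᵀ * U * (Qᵀ * U)ᵀ).trace := by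
    rw [transpose_mul, transpose_transpose, ← Matrix.mul_assoc _ Q, trace_mul_comm _ Qᵀ]
    simp only [Matrix.mul_assoc]
  have hQU : (Q * Qᵀ * (U * Uᵀ)).trace = (Qᵀ * U * (Qᵀ * U)ᵀ).trace := by
    rw [trace_mul_comm, hUQ]
  have hsq (X : Matrix (Fin n) (Fin r) ℝ) :
      (X * Xᵀ * (X * Xᵀ)).trace = (Xᵀ * X * (Xᵀ * X)).trace := by
    rw [Matrix.mul_assoc, trace_mul_comm]
    simp only [Matrix.mul_assoc]
  rw [frob_sq_eq_trace, transpose_sub, transpose_mul, transpose_mul, transpose_transpose,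
    transpose_transpose, Matrix.sub_mul, Matrix.mul_sub, Matrix.mul_sub, trace_sub, trace_sub,
    trace_sub, hUQ, hQU, hsq, hsq]
  ring

lemma exists_orthonormal_eigenvectors_nthLargestEig_le {n k : ℕ} {M : Matrix (Fin n) (Fin n) ℝ}
    (hM : M.IsHermitian) (hk : 0 < k) (hkn : k ≤ n) :
    ∃ (K : Matrix (Fin n) (Fin k) ℝ) (d : Fin k → ℝ),
      Kᵀ * K = 1 ∧ M * K = K * diagonal d ∧ ∀ i, nthLargestEig M k ≤ d i := by
  set π := Tuple.sort hM.eigenvalues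
  -- the `k` largest eigenvalues sit at the sorted positions `n - k, …, n - 1`
  let top : Fin k ↪ Fin n :=
    ⟨fun i => π ⟨n - k + i, by omega⟩, fun i j hij => by simpa [Fin.ext_iff] using π.injective hij⟩
  let W : Matrix (Fin n) (Fin n) ℝ := ↑hM.eigenvectorUnitary
  have hWW : Wᴴ * W = 1 := Unitary.coe_star_mul_self hM.eigenvectorUnitary
  refine ⟨W.submatrix id top, hM.eigenvalues ∘ top, ?_, ?_, fun i => ?_⟩
  · ext i j
    have := congrFun₂ hWW (top i) (top j)
    simpa [mul_apply, one_apply, top.injective.eq_iff] using this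
  · ext a j
    rw [mul_diagonal]
    have := congrFun (hM.mulVec_eigenvectorBasis (top j)) a
    simpa [W, mul_apply, mulVec, dotProduct, mul_comm] using this
  · rw [nthLargestEig, dif_pos ⟨hM, hk, hkn⟩]
    exact Tuple.monotone_sort hM.eigenvalues (by simp [Fin.le_def])

lemma posSemidef_transpose_mul_self_sub_smul_of_eigenvectors {m ι : Type*} [Fintype m]
    [Fintype ι] [DecidableEq ι] {A K : Matrix m ι ℝ} {d : ι → ℝ} {σ : ℝ}
    (hK : Kᵀ * K = 1) (hAK : A * Aᵀ * K = K * diagonal d) (hσ : 0 < σ) (hd : ∀ i, σ ≤ d i) :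
    (Aᵀ * A - σ • 1).PosSemidef := by
  set S := Aᵀ * K
  have hAS : A * S = K * diagonal d := by rw [← Matrix.mul_assoc, hAK]
  have hSS : Sᵀ * S = diagonal d := by
    rw [transpose_mul, transpose_transpose, Matrix.mul_assoc, hAS, ← Matrix.mul_assoc, hK,
      Matrix.one_mul]
  have hS : IsUnit S := by
    rw [isUnit_iff_isUnit_det, isUnit_iff_ne_zero]
    intro h
    have := congrArg det hSS
    rw [det_mul, det_transpose, h, mul_zero, det_diagonal, eq_comm] at this
    exact Finset.prod_ne_zero_iff.mpr (fun i _ => (hσ.trans_le (hd i)).ne') this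
  have hconj : star S * (Aᵀ * A - σ • 1) * S = diagonal fun i => d i * (d i - σ) := by
    have hgram : Sᵀ * (Aᵀ * A) * S = diagonal d * diagonal d := by
      calc Sᵀ * (Aᵀ * A) * S = (A * S)ᵀ * (A * S) := by
            rw [transpose_mul A S]; simp only [Matrix.mul_assoc]
        _ = diagonal d * diagonal d := by
            rw [hAS, transpose_mul, diagonal_transpose, Matrix.mul_assoc, ← Matrix.mul_assoc Kᵀ,
              hK, Matrix.one_mul]
    rw [star_eq_conjTranspose, conjTranspose_eq_transpose_of_trivial, Matrix.mul_sub,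
      Matrix.sub_mul, hgram, Matrix.mul_smul, Matrix.smul_mul, Matrix.mul_one, hSS,
      diagonal_mul_diagonal, ← diagonal_smul, diagonal_sub]
    simp only [Pi.smul_apply, smul_eq_mul, mul_sub, mul_comm σ]
  rw [← hS.posSemidef_star_left_conjugate_iff, hconj, posSemidef_diagonal_iff]
  exact fun i => mul_nonneg (hσ.le.trans (hd i)) (sub_nonneg.mpr (hd i))

lemma posSemidef_transpose_mul_self_sub_nthLargestEig {n r : ℕ} (A : Matrix (Fin n) (Fin r) ℝ) :
    (Aᵀ * A - nthLargestEig (A * Aᵀ) r • 1).PosSemidef := by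
  set σ := nthLargestEig (A * Aᵀ) r
  have hAA : (Aᵀ * A).PosSemidef := by
    simpa using posSemidef_conjTranspose_mul_self A
  rcases le_or_gt σ 0 with hσ | hσ
  · rw [sub_eq_add_neg, ← neg_smul]
    exact hAA.add (PosSemidef.one.smul (neg_nonneg.mpr hσ))
  have hr : 0 < r ∧ r ≤ n := by
    by_contra h
    exact hσ.ne' (by simp only [σ, nthLargestEig, h, and_false, dite_false])
  have hM : (A * Aᵀ).IsHermitian := by simpa using isHermitian_mul_conjTranspose_self A
  obtain ⟨K, d, hK, hAK, hd⟩ := exists_orthonormal_eigenvectors_nthLargestEig_le hM hr.1 hr.2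
  exact posSemidef_transpose_mul_self_sub_smul_of_eigenvectors hK hAK hσ hd

/-- The constant `c = 2(√2 - 1)` is the positive root of `c²/4 + c = 1`, which makes the case
`b = σ`, `p = -cσ/2`, `t = 0` an equality. -/
lemma two_mul_sqrt_two_sub_one_mul_le (σ b p t : ℝ) (hb : σ ≤ b) (hp : p ≤ b) (ht : 0 ≤ t) :
    2 * (√2 - 1) * σ * (b - p) ≤ b ^ 2 + p ^ 2 + 2 * t ^ 2 - 4 * t * p := by
  have h2 : √2 ^ 2 = 2 := Real.sq_sqrt (by norm_num)
  have h1 : (1 : ℝ) ≤ √2 := by nlinarith [Real.sqrt_nonneg 2]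
  have h15 : √2 ≤ 3 / 2 := by nlinarith [Real.sqrt_nonneg 2]
  rcases le_or_gt σ 0 with hσ | hσ
  · have : 0 ≤ b ^ 2 + p ^ 2 + 2 * t ^ 2 - 4 * t * p := by
      rcases le_or_gt p 0 with hp0 | hp0
      · nlinarith [mul_nonneg ht (neg_nonneg.2 hp0)]
      · nlinarith [sq_nonneg (t - p)]
    nlinarith [mul_nonneg (sub_nonneg.2 h1) (sub_nonneg.2 hp)]
  rcases le_or_gt p 0 with hp0 | hp0
  · nlinarith [sq_nonneg (p + (√2 - 1) * σ), mul_nonneg ht (neg_nonneg.2 hp0),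
      mul_nonneg hσ.le (sub_nonneg.2 hb), mul_nonneg (hσ.le.trans hb) (sub_nonneg.2 hb)]
  · nlinarith [sq_nonneg (t - p), mul_nonneg (sub_nonneg.2 hp)
      (show (0:ℝ) ≤ b + p - 2 * (√2 - 1) * σ by nlinarith)]

lemma isHermitian_of_posSemidef_sub_smul_one {ι : Type*} [DecidableEq ι] {B : Matrix ι ι ℝ}
    {σ : ℝ} (h : (B - σ • 1).PosSemidef) : B.IsHermitian := by
  simpa using h.isHermitian.add ((isHermitian_one (α := ℝ)).smul (IsSelfAdjoint.all σ))

section TraceInequality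

variable {ι : Type*} [Fintype ι]

lemma sum_diag_sq_le_trace_mul_self {X : Matrix ι ι ℝ} (hX : X.IsHermitian) :
    ∑ i, X i i ^ 2 ≤ (X * X).trace := by
  have hsq : (X * X).trace = ∑ i, ∑ j, X i j ^ 2 := by
    simp only [trace, diag, mul_apply, sq]
    refine Finset.sum_congr rfl fun i _ => Finset.sum_congr rfl fun j _ => ?_
    rw [← hX.apply i j, star_trivial]
  rw [hsq]
  exact Finset.sum_le_sum fun i _ =>
    Finset.single_le_sum (fun j _ => sq_nonneg (X i j)) (Finset.mem_univ i)

variable [DecidableEq ι]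

lemma two_mul_sqrt_two_sub_one_mul_trace_sub_le_of_diagonal {σ : ℝ} {B P : Matrix ι ι ℝ}
    {p : ι → ℝ} (hB : (B - σ • 1).PosSemidef) (hBp : (B - diagonal p).PosSemidef)
    (hP : P.PosSemidef) :
    2 * (√2 - 1) * σ * (B - diagonal p).trace ≤
      (diagonal p * diagonal p).trace + (B * B).trace + 2 * (P * P).trace
        - 4 * (P * diagonal p).trace := by
  have hσB (i : ι) : σ ≤ B i i := by simpa using hB.diag_nonneg (i := i)
  have hpB (i : ι) : p i ≤ B i i := by simpa using hBp.diag_nonneg (i := i)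
  have hBB := sum_diag_sq_le_trace_mul_self (isHermitian_of_posSemidef_sub_smul_one hB)
  have hPP := sum_diag_sq_le_trace_mul_self hP.isHermitian
  have htrBp : (B - diagonal p).trace = ∑ i, B i i - ∑ i, p i := by simp [trace]
  have htrpp : (diagonal p * diagonal p).trace = ∑ i, p i ^ 2 := by simp [trace, sq]
  have htrPp : (P * diagonal p).trace = ∑ i, P i i * p i := by simp [trace]
  have hsum : ∑ i, 2 * (√2 - 1) * σ * (B i i - p i) ≤
      ∑ i, (B i i ^ 2 + p i ^ 2 + 2 * P i i ^ 2 - 4 * (P i i * p i)) :=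
    Finset.sum_le_sum fun i _ => by
      linarith [two_mul_sqrt_two_sub_one_mul_le σ (B i i) (p i) (P i i) (hσB i) (hpB i)
        (hP.diag_nonneg (i := i))]
  simp only [← Finset.mul_sum, Finset.sum_add_distrib, Finset.sum_sub_distrib] at hsum
  rw [htrBp, htrpp, htrPp]
  linarith

lemma two_mul_sqrt_two_sub_one_mul_trace_sub_le {σ : ℝ} {B P C : Matrix ι ι ℝ}
    (hB : (B - σ • 1).PosSemidef) (hBC : (B - C).PosSemidef) (hP : P.PosSemidef) :
    2 * (√2 - 1) * σ * (B - C).trace ≤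
      (C * C).trace + (B * B).trace + 2 * (P * P).trace - 4 * (P * C).trace := by
  have hC : C.IsHermitian := by
    simpa using (isHermitian_of_posSemidef_sub_smul_one hB).sub hBC.isHermitian
  obtain ⟨V, hVV, hVV', hCV⟩ : ∃ V : Matrix ι ι ℝ,
      Vᴴ * V = 1 ∧ V * Vᴴ = 1 ∧ Vᴴ * C * V = diagonal hC.eigenvalues :=
    ⟨hC.eigenvectorUnitary, Unitary.coe_star_mul_self hC.eigenvectorUnitary,
      Unitary.coe_mul_star_self hC.eigenvectorUnitary, by
      rw [← star_eq_conjTranspose]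
      simpa [RCLike.ofReal_real_eq_id] using hC.conjStarAlgAut_star_eigenvectorUnitary⟩
  have conj_sub (X Y : Matrix ι ι ℝ) : Vᴴ * (X - Y) * V = Vᴴ * X * V - Vᴴ * Y * V := by
    rw [Matrix.mul_sub, Matrix.sub_mul]
  have conj_mul (X Y : Matrix ι ι ℝ) : Vᴴ * (X * Y) * V = (Vᴴ * X * V) * (Vᴴ * Y * V) := by
    simp only [Matrix.mul_assoc, ← Matrix.mul_assoc V, hVV', Matrix.one_mul]
  have trace_conj (X : Matrix ι ι ℝ) : (Vᴴ * X * V).trace = X.trace := by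
    rw [trace_mul_cycle, hVV', Matrix.one_mul]
  have hB' := hB.conjTranspose_mul_mul_same V
  rw [conj_sub, Matrix.mul_smul, Matrix.smul_mul, Matrix.mul_one, hVV] at hB'
  have hBC' := hBC.conjTranspose_mul_mul_same V
  rw [conj_sub, hCV] at hBC'
  have key := two_mul_sqrt_two_sub_one_mul_trace_sub_le_of_diagonal hB' hBC'
    (hP.conjTranspose_mul_mul_same V)
  simpa only [← hCV, ← conj_sub, ← conj_mul, trace_conj] using key

lemma two_mul_sqrt_two_sub_one_mul_trace_sub_add_le {σ : ℝ} {B P G : Matrix ι ι ℝ}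
    (hB : (B - σ • 1).PosSemidef) (hP : P.PosSemidef) (hE : (B - 2 • P + G).PosSemidef) :
    2 * (√2 - 1) * σ * (B - 2 • P + G).trace ≤
      (G * G).trace - 2 * (P * P).trace + (B * B).trace := by
  have hC : B - 2 • P + G = B - (2 • P - G) := by abel
  rw [hC] at hE ⊢
  refine (two_mul_sqrt_two_sub_one_mul_trace_sub_le hB hE hP).trans_eq ?_
  simp only [Matrix.sub_mul, Matrix.mul_sub, Matrix.smul_mul, Matrix.mul_smul, trace_sub,
    trace_smul, trace_mul_comm G P]
  ring

end TraceInequality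

theorem matrix_dist_dominates_factor_dist_general {n r : ℕ}
    (U Ustar : Matrix (Fin n) (Fin r) ℝ)
    (R : Matrix (Fin r) (Fin r) ℝ) (hR : Rᵀ * R = 1)
    (hpsd : ((Ustar * R)ᵀ * U).PosSemidef) :
    frob (U * Uᵀ - Ustar * Ustarᵀ) ^ 2 ≥
      2 * (Real.sqrt 2 - 1) * nthLargestEig (Ustar * Ustarᵀ) r *
        frob (U - Ustar * R) ^ 2 := by
  have hUstar := posSemidef_transpose_mul_self_sub_nthLargestEig Ustar
  set σ := nthLargestEig (Ustar * Ustarᵀ) r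
  set Q := Ustar * R
  have hQQ : Q * Qᵀ = Ustar * Ustarᵀ := by
    rw [transpose_mul, Matrix.mul_assoc, ← Matrix.mul_assoc R, mul_eq_one_comm.mp hR,
      Matrix.one_mul]
  have hB : (Qᵀ * Q - σ • 1).PosSemidef := by
    have hconj : Rᴴ * (Ustarᵀ * Ustar - σ • 1) * R = Qᵀ * Q - σ • 1 := by
      rw [conjTranspose_eq_transpose_of_trivial, Matrix.mul_sub, Matrix.sub_mul, Matrix.mul_smul,
        Matrix.smul_mul, Matrix.mul_one, hR, transpose_mul]
      simp only [Q, Matrix.mul_assoc]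
    simpa only [hconj] using hUstar.conjTranspose_mul_mul_same R
  have hsymm : (Qᵀ * U)ᵀ = Qᵀ * U := by simpa using hpsd.isHermitian.eq
  have hE : (Qᵀ * Q - 2 • (Qᵀ * U) + Uᵀ * U).PosSemidef := by
    have hUQ : Uᵀ * Q = Qᵀ * U := by rw [← hsymm, transpose_mul, transpose_transpose]
    have hgram : (U - Q)ᴴ * (U - Q) = Qᵀ * Q - 2 • (Qᵀ * U) + Uᵀ * U := by
      rw [conjTranspose_eq_transpose_of_trivial, transpose_sub, Matrix.sub_mul, Matrix.mul_sub,
        Matrix.mul_sub, hUQ]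
      abel
    simpa only [hgram] using posSemidef_conjTranspose_mul_self (U - Q)
  rw [ge_iff_le, ← hQQ, frob_sq_mul_transpose_sub_mul_transpose, frob_sq_sub_eq_trace, hsymm]
  exact two_mul_sqrt_two_sub_one_mul_trace_sub_add_le hB hpsd hE

/-- Matrix-space distance dominates factor-space distance, scaled by `σ_r(U* U*ᵀ)`,
for the optimal orthogonal alignment `R`. -/
theorem matrix_dist_dominates_factor_dist {n r : ℕ} (hn : 0 < n) (hr : 0 < r)
    (U Ustar : Matrix (Fin n) (Fin r) ℝ)
    (R : Matrix (Fin r) (Fin r) ℝ) (hR : Rᵀ * R = 1)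
    (hsym : ((Ustar * R)ᵀ * U)ᵀ = (Ustar * R)ᵀ * U)
    (hpsd : ((Ustar * R)ᵀ * U).PosSemidef) :
    frob (U * Uᵀ - Ustar * Ustarᵀ) ^ 2 ≥
      2 * (Real.sqrt 2 - 1) * nthLargestEig (Ustar * Ustarᵀ) r *
        frob (U - Ustar * R) ^ 2 :=
  matrix_dist_dominates_factor_dist_general U Ustar R hR hpsd
end
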